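/- Let 1 ≤ n_c < n and let K := span{u_1, …, u_{n_c}} be the span of the eigenvectors corresponding to the smallest n_c eigenvalues of A. Then η_K := sup_{‖g‖₂=1} ‖(I − P_K) A^{-1} g‖_A ≤ √(μ_{n_c+1}) = 1/√(λ_{n_c+1}), where P_K is the A-orthogonal projection onto K and μ_j = 1/λ_j. -/

import Mathlib

/-!
Write `e = (I - P_K) A⁻¹ g` and `s = ‖e‖_A²`. Galerkin orthogonality gives
`s = (e, A A⁻¹ g) = (e, g)`, so `s² ≤ ‖e‖₂²` by Cauchy–Schwarz. Since `e` is `A`-orthogonal to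
`u_1, …, u_{n_c}`, its expansion in the `A`-orthonormal eigenbasis only involves eigenvalues
`≥ λ_{n_c+1}`, whence the Rayleigh bound `λ_{n_c+1} ‖e‖₂² ≤ s`. Together, `λ_{n_c+1} s² ≤ s`,
i.e. `s ≤ 1/λ_{n_c+1}`.
-/

open Matrix

/-- The Euclidean (`L²`) norm on `ℝⁿ`: `‖x‖₂ = √(xᵀx)`. -/
noncomputable def l2N {n : ℕ} (x : Fin n → ℝ) : ℝ := Real.sqrt (x ⬝ᵥ x)

/-- The energy norm induced by the matrix `A`: `‖x‖_A = √(xᵀAx)`. -/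
noncomputable def aN {n : ℕ} (A : Matrix (Fin n) (Fin n) ℝ) (x : Fin n → ℝ) : ℝ :=
  Real.sqrt (x ⬝ᵥ (A *ᵥ x))

/-- `η_K = sup_{‖g‖₂ = 1} ‖(I - P_K) A⁻¹ g‖_A`, where `P` is the `A`-orthogonal
projection onto the subspace `K`. -/
noncomputable def etaK {n : ℕ} (A : Matrix (Fin n) (Fin n) ℝ)
    (P : (Fin n → ℝ) →ₗ[ℝ] (Fin n → ℝ)) : ℝ :=
  sSup ((fun g => aN A ((A⁻¹ *ᵥ g) - P (A⁻¹ *ᵥ g))) '' {g | l2N g = 1})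

variable {ι : Type*} [Fintype ι]

def Matrix.AOrthonormal [DecidableEq ι] (A : Matrix ι ι ℝ) (U : ι → ι → ℝ) : Prop :=
  ∀ i j, U i ⬝ᵥ (A *ᵥ U j) = if i = j then 1 else 0

lemma Matrix.IsSymm.dotProduct_mulVec_comm {R : Type*} [CommSemiring R] {A : Matrix ι ι R}
    (hA : A.IsSymm) (x y : ι → R) :
    x ⬝ᵥ (A *ᵥ y) = y ⬝ᵥ (A *ᵥ x) := by
  rw [dotProduct_mulVec, ← mulVec_transpose, hA.eq, dotProduct_comm]

namespace Matrix.AOrthonormal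

variable [DecidableEq ι] {A : Matrix ι ι ℝ} {U : ι → ι → ℝ} {Λ : ι → ℝ}

lemma eq_sum_smul (hU : A.AOrthonormal U) (x : ι → ℝ) :
    x = ∑ i, (U i ⬝ᵥ (A *ᵥ x)) • U i := by
  -- with `M` the matrix whose rows are the `uᵢ`, orthonormality reads `M A Mᵀ = 1`, so `A⁻¹ = MᵀM`
  have hMAMt : of U * (A * (of U)ᵀ) = 1 := by
    ext i j
    simpa [mul_apply, mulVec, dotProduct, one_apply] using hU i j
  have hMtMA : (of U)ᵀ * of U * A = 1 :=
    mul_eq_one_comm.mp (by rw [← Matrix.mul_assoc]; exact mul_eq_one_comm.mp hMAMt)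
  calc x = ((of U)ᵀ * of U * A) *ᵥ x := by rw [hMtMA, one_mulVec]
    _ = ∑ i, (U i ⬝ᵥ (A *ᵥ x)) • U i := by
      rw [← mulVec_mulVec, ← mulVec_mulVec, mulVec_transpose, vecMul_eq_sum]
      rfl

lemma eigenvalue_pos (hU : A.AOrthonormal U) (hUeig : ∀ i, A *ᵥ U i = Λ i • U i) (i : ι) :
    0 < Λ i := by
  have h : Λ i * (U i ⬝ᵥ U i) = 1 := by
    simpa [hUeig i, dotProduct_smul] using hU i i
  have hUU : 0 ≤ U i ⬝ᵥ U i := dotProduct_self_star_nonneg (U i)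
  nlinarith

lemma mul_dotProduct_self_le (hU : A.AOrthonormal U) (hA : A.IsSymm)
    (hUeig : ∀ i, A *ᵥ U i = Λ i • U i) {μ : ℝ} (hμ : 0 ≤ μ) {x : ι → ℝ}
    (hx : ∀ i, Λ i < μ → x ⬝ᵥ (A *ᵥ U i) = 0) :
    μ * (x ⬝ᵥ x) ≤ x ⬝ᵥ (A *ᵥ x) := by
  have hcoeff : ∀ i, U i ⬝ᵥ (A *ᵥ x) = Λ i * (x ⬝ᵥ U i) := fun i => by
    rw [hA.dotProduct_mulVec_comm, hUeig i, dotProduct_smul, smul_eq_mul]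
  have hexp := hU.eq_sum_smul x
  simp only [hcoeff] at hexp
  have hl2 : x ⬝ᵥ x = ∑ i, Λ i * (x ⬝ᵥ U i) ^ 2 := by
    nth_rewrite 1 [hexp]
    simp only [sum_dotProduct, smul_dotProduct, smul_eq_mul, dotProduct_comm (U _) x, sq, mul_assoc]
  have henergy : x ⬝ᵥ (A *ᵥ x) = ∑ i, (Λ i * (x ⬝ᵥ U i)) ^ 2 := by
    nth_rewrite 1 [hexp]
    simp only [sum_dotProduct, smul_dotProduct, smul_eq_mul, hcoeff, sq]
  rw [hl2, henergy, Finset.mul_sum]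
  refine Finset.sum_le_sum fun i _ => ?_
  rcases lt_or_ge (Λ i) μ with hlt | hge
  · have h0 : Λ i * (x ⬝ᵥ U i) = 0 := by
      rw [← hx i hlt, hUeig i, dotProduct_smul, smul_eq_mul]
    have h0' : Λ i * (x ⬝ᵥ U i) ^ 2 = 0 := by rw [sq, ← mul_assoc, h0, zero_mul]
    simp [h0, h0']
  · calc μ * (Λ i * (x ⬝ᵥ U i) ^ 2)
        ≤ Λ i * (Λ i * (x ⬝ᵥ U i) ^ 2) :=
          mul_le_mul_of_nonneg_right hge (mul_nonneg (hμ.trans hge) (sq_nonneg _))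
      _ = (Λ i * (x ⬝ᵥ U i)) ^ 2 := by ring

end Matrix.AOrthonormal

section Galerkin

variable {A : Matrix ι ι ℝ} {K : Submodule ℝ (ι → ℝ)} {P : (ι → ℝ) →ₗ[ℝ] (ι → ℝ)}

lemma galerkin_orthogonal (hPproj : ∀ x, ∀ y ∈ K, (P x) ⬝ᵥ (A *ᵥ y) = x ⬝ᵥ (A *ᵥ y))
    (x : ι → ℝ) {y : ι → ℝ} (hy : y ∈ K) : (x - P x) ⬝ᵥ (A *ᵥ y) = 0 := by
  rw [sub_dotProduct, hPproj x y hy, sub_self]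

lemma energy_sub_galerkin_eq (hPmem : ∀ x, P x ∈ K)
    (hPproj : ∀ x, ∀ y ∈ K, (P x) ⬝ᵥ (A *ᵥ y) = x ⬝ᵥ (A *ᵥ y)) (v : ι → ℝ) :
    (v - P v) ⬝ᵥ (A *ᵥ (v - P v)) = (v - P v) ⬝ᵥ (A *ᵥ v) := by
  rw [mulVec_sub, dotProduct_sub, galerkin_orthogonal hPproj v (hPmem v), sub_zero]

end Galerkin

theorem stmt19_general {n : ℕ} (A : Matrix (Fin n) (Fin n) ℝ) (hA : A.PosDef)
    -- the eigenvalues `λ_1 ≤ ⋯ ≤ λ_n` of `A` with `A`-orthonormal eigenvectors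
    (Λ : Fin n → ℝ) (U : Fin n → (Fin n → ℝ)) (hΛmono : Monotone Λ)
    (hUeig : ∀ i, A *ᵥ U i = Λ i • U i)
    (hUortho : ∀ i j, U i ⬝ᵥ (A *ᵥ U j) = if i = j then (1 : ℝ) else 0)
    -- `1 ≤ n_c < n` and `K = span{u_1, …, u_{n_c}}`
    (nc : ℕ) (hncn : nc < n)
    (K : Submodule ℝ (Fin n → ℝ))
    (hKspan : K =
      Submodule.span ℝ (Set.range fun i : Fin nc => U (Fin.castLE hncn.le i)))
    -- `P` is the `A`-orthogonal (Galerkin) projection onto `K`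
    (P : (Fin n → ℝ) →ₗ[ℝ] (Fin n → ℝ))
    (hPmem : ∀ x, P x ∈ K)
    (hPproj : ∀ x, ∀ y ∈ K, (P x) ⬝ᵥ (A *ᵥ y) = x ⬝ᵥ (A *ᵥ y)) :
    etaK A P ≤ Real.sqrt (1 / Λ ⟨nc, hncn⟩) := by
  have hU : A.AOrthonormal U := hUortho
  have hsymm : A.IsSymm := isHermitian_iff_isSymm.mp hA.isHermitian
  have hΛpos := hU.eigenvalue_pos hUeig ⟨nc, hncn⟩
  refine Real.sSup_le ?_ (Real.sqrt_nonneg _)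
  rintro _ ⟨g, hg, rfl⟩
  refine Real.sqrt_le_sqrt ?_
  set v := A⁻¹ *ᵥ g
  set e := v - P v
  have hAv : A *ᵥ v = g := by
    rw [mulVec_mulVec, mul_nonsing_inv A hA.det_pos.ne'.isUnit, one_mulVec]
  have hs : e ⬝ᵥ (A *ᵥ e) = e ⬝ᵥ g := by rw [energy_sub_galerkin_eq hPmem hPproj, hAv]
  have hCS : (e ⬝ᵥ g) ^ 2 ≤ e ⬝ᵥ e := by
    have hgg : g ⬝ᵥ g = 1 := Real.sqrt_eq_one.mp hg
    calc (e ⬝ᵥ g) ^ 2 ≤ (∑ i, e i ^ 2) * ∑ i, g i ^ 2 := Finset.sum_mul_sq_le_sq_mul_sq _ e g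
      _ = e ⬝ᵥ e := by simp only [dotProduct, ← sq] at hgg ⊢; rw [hgg, mul_one]
  have hRayleigh : Λ ⟨nc, hncn⟩ * (e ⬝ᵥ e) ≤ e ⬝ᵥ (A *ᵥ e) := by
    refine hU.mul_dotProduct_self_le hsymm hUeig hΛpos.le fun i hi => galerkin_orthogonal hPproj v
      (hKspan ▸ Submodule.subset_span ⟨⟨i, hΛmono.reflect_lt hi⟩, rfl⟩)
  rw [hs] at hRayleigh ⊢
  have hsq : Λ ⟨nc, hncn⟩ * (e ⬝ᵥ g) ^ 2 ≤ e ⬝ᵥ g :=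
    (mul_le_mul_of_nonneg_left hCS hΛpos.le).trans hRayleigh
  rw [le_div_iff₀ hΛpos]
  nlinarith [mul_nonneg hΛpos.le (sq_nonneg (e ⬝ᵥ g))]

/-- The estimate (6.1): if `K = span{u_1, …, u_{n_c}}` is spanned by the
eigenvectors corresponding to the smallest `n_c` eigenvalues of `A`, then
`η_K ≤ √(μ_{n_c+1}) = 1/√(λ_{n_c+1})`. -/
theorem stmt19 {n : ℕ} (A : Matrix (Fin n) (Fin n) ℝ) (hA : A.PosDef)
    -- the eigenvalues `λ_1 ≤ ⋯ ≤ λ_n` of `A` with `A`-orthonormal eigenvectors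
    (Λ : Fin n → ℝ) (U : Fin n → (Fin n → ℝ)) (hΛmono : Monotone Λ)
    (hUeig : ∀ i, A *ᵥ U i = Λ i • U i)
    (hUortho : ∀ i j, U i ⬝ᵥ (A *ᵥ U j) = if i = j then (1 : ℝ) else 0)
    -- `1 ≤ n_c < n` and `K = span{u_1, …, u_{n_c}}`
    (nc : ℕ) (hnc : 1 ≤ nc) (hncn : nc < n)
    (K : Submodule ℝ (Fin n → ℝ))
    (hKspan : K =
      Submodule.span ℝ (Set.range fun i : Fin nc => U (Fin.castLE hncn.le i)))
    -- `P` is the `A`-orthogonal (Galerkin) projection onto `K`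
    (P : (Fin n → ℝ) →ₗ[ℝ] (Fin n → ℝ))
    (hPmem : ∀ x, P x ∈ K)
    (hPproj : ∀ x, ∀ y ∈ K, (P x) ⬝ᵥ (A *ᵥ y) = x ⬝ᵥ (A *ᵥ y)) :
    etaK A P ≤ Real.sqrt (1 / Λ ⟨nc, hncn⟩) :=
  stmt19_general A hA Λ U hΛmono hUeig hUortho nc hncn K hKspan P hPmem hPproj
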